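/- arXiv:2207.08182 — 3 statements merged into one kernel-verified Lean document; each statement's English description precedes it below -/
import Mathlib

section
/- Suppose the vertices of a graph Γ are partitioned into nonempty sets J_1, …, J_d, and θ is a configuration such that (i) for each p, the restriction θ restricted to J_p is an equilibrium of the induced subgraph on J_p, and (ii) for any p ≠ q and any vertex j ∈ J_p, the configuration of θ restricted to N(j) ∩ J_q is balanced. Then for all α_1, …, α_d ∈ T, the configuration obtained by shifting all phases in J_p by α_p (for each p) is an equilibrium of Γ. -/
/-!
Split the neighbourhood of `j` by parts. On its own part the common shift `α (part j)` cancels,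
so the sum is the internal equilibrium sum. On another part `q` every term is
`sin (θ k + β)` with the same `β = α q - θ j - α (part j)`, and the sum of these is the
imaginary part of `e^{iβ} ∑ e^{iθ_k} = 0`.
-/

open Finset

/-- The unit complex number `e^{iθ}` associated to an angle `θ ∈ ℝ/2πℤ`. -/
noncomputable def Real.Angle.toC (θ : Real.Angle) : ℂ :=
  (θ.cos : ℂ) + (θ.sin : ℂ) * Complex.I

theorem Real.Angle.sum_sin_add_eq_zero_of_sum_toC_eq_zero {ι : Type*} (s : Finset ι)
    (θ : ι → Real.Angle) (hbal : ∑ k ∈ s, (θ k).toC = 0) (β : Real.Angle) :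
    ∑ k ∈ s, (θ k + β).sin = 0 := by
  have hcos : ∑ k ∈ s, (θ k).cos = 0 := by
    simpa [Real.Angle.toC, Complex.re_sum] using congrArg Complex.re hbal
  have hsin : ∑ k ∈ s, (θ k).sin = 0 := by
    simpa [Real.Angle.toC, Complex.im_sum] using congrArg Complex.im hbal
  simp only [Real.Angle.sin_add, sum_add_distrib, ← sum_mul, hcos, hsin, zero_mul, add_zero]

theorem partition_balanced_shift_equilibrium_general {V : Type*} [Fintype V]
    {d : ℕ} (G : SimpleGraph V) [DecidableRel G.Adj]
    (part : V → Fin d)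
    (θ : V → Real.Angle)
    (hequi : ∀ j, ∑ k ∈ (G.neighborFinset j).filter (fun k => part k = part j),
        (θ k - θ j).sin = 0)
    (hbal : ∀ j, ∀ q : Fin d, q ≠ part j →
        ∑ k ∈ (G.neighborFinset j).filter (fun k => part k = q), (θ k).toC = 0)
    (α : Fin d → Real.Angle) :
    ∀ j, ∑ k ∈ G.neighborFinset j,
        ((θ k + α (part k)) - (θ j + α (part j))).sin = 0 := by
  intro j
  rw [← sum_fiberwise (G.neighborFinset j) part]
  refine sum_eq_zero fun q _ => ?_
  rcases eq_or_ne q (part j) with rfl | hq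
  · rw [← hequi j]
    refine sum_congr rfl fun k hk => ?_
    rw [(mem_filter.1 hk).2]
    congr 1
    abel
  · rw [← Real.Angle.sum_sin_add_eq_zero_of_sum_toC_eq_zero _ _ (hbal j q hq)
      (α q - (θ j + α (part j)))]
    refine sum_congr rfl fun k hk => ?_
    rw [(mem_filter.1 hk).2]
    congr 1
    abel

/-- Shifting each part of a partition of the vertices by an arbitrary constant phase
gives an equilibrium, provided each part is internally at equilibrium and
each vertex sees a balanced configuration in every other part. -/
theorem partition_balanced_shift_equilibrium {V : Type*} [Fintype V] [DecidableEq V]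
    {d : ℕ} (G : SimpleGraph V) [DecidableRel G.Adj]
    (part : V → Fin d) (hne : ∀ p : Fin d, ∃ v, part v = p)
    (θ : V → Real.Angle)
    (hequi : ∀ j, ∑ k ∈ (G.neighborFinset j).filter (fun k => part k = part j),
        (θ k - θ j).sin = 0)
    (hbal : ∀ j, ∀ q : Fin d, q ≠ part j →
        ∑ k ∈ (G.neighborFinset j).filter (fun k => part k = q), (θ k).toC = 0)
    (α : Fin d → Real.Angle) :
    ∀ j, ∑ k ∈ G.neighborFinset j,
        ((θ k + α (part k)) - (θ j + α (part j))).sin = 0 :=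
  partition_balanced_shift_equilibrium_general G part θ hequi hbal α
end

section
/- Let Γ be the complete bipartite graph with parts J and K, and θ a configuration. If θ restricted to J is balanced and θ restricted to K is balanced, then θ is an equilibrium of the Kuramoto system on Γ. -/
open Finset

theorem Real.Angle.sin_sub (a b : Real.Angle) :
    (a - b).sin = a.sin * b.cos - a.cos * b.sin := by
  rw [sub_eq_add_neg, Real.Angle.sin_add, Real.Angle.sin_neg, Real.Angle.cos_neg]
  ring

theorem sum_sin_sub_eq_zero_of_sum_toC_eq_zero {ι : Type*} (s : Finset ι) (θ : ι → Real.Angle)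
    (h : ∑ i ∈ s, (θ i).toC = 0) (φ : Real.Angle) :
    ∑ i ∈ s, (θ i - φ).sin = 0 := by
  have hcos : ∑ i ∈ s, (θ i).cos = 0 := by
    simpa [Real.Angle.toC, Complex.re_sum] using congrArg Complex.re h
  have hsin : ∑ i ∈ s, (θ i).sin = 0 := by
    simpa [Real.Angle.toC, Complex.im_sum] using congrArg Complex.im h
  simp only [Real.Angle.sin_sub, sum_sub_distrib, ← sum_mul, hcos, hsin, zero_mul, sub_zero]

theorem bipartite_balanced_balanced_equilibrium_general {V : Type*}
    (J K : Finset V)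
    (θ : V → Real.Angle)
    (hbalJ : ∑ j ∈ J, (θ j).toC = 0) (hbalK : ∑ k ∈ K, (θ k).toC = 0) :
    (∀ j ∈ J, ∑ k ∈ K, (θ k - θ j).sin = 0) ∧
    (∀ k ∈ K, ∑ j ∈ J, (θ j - θ k).sin = 0) :=
  ⟨fun j _ => sum_sin_sub_eq_zero_of_sum_toC_eq_zero K θ hbalK (θ j),
    fun k _ => sum_sin_sub_eq_zero_of_sum_toC_eq_zero J θ hbalJ (θ k)⟩

/-- On a complete bipartite graph with parts `J`, `K`, if both parts are
balanced then the configuration is an equilibrium of the Kuramoto system. -/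
theorem bipartite_balanced_balanced_equilibrium {V : Type*} [Fintype V] [DecidableEq V]
    (J K : Finset V) (hJ : J.Nonempty) (hK : K.Nonempty)
    (hdisj : Disjoint J K) (hcover : J ∪ K = Finset.univ)
    (θ : V → Real.Angle)
    (hbalJ : ∑ j ∈ J, (θ j).toC = 0) (hbalK : ∑ k ∈ K, (θ k).toC = 0) :
    (∀ j ∈ J, ∑ k ∈ K, (θ k - θ j).sin = 0) ∧
    (∀ k ∈ K, ∑ j ∈ J, (θ j - θ k).sin = 0) :=
  bipartite_balanced_balanced_equilibrium_general J K θ hbalJ hbalK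
end

section
/- On the eye graph G_2 (two disjoint 6-cycles, with four added edges joining the first and fourth vertex of the first cycle to the first and fourth vertex of the second cycle), for every α, β ∈ T the configuration assigning phases (2kπ/6 + α)_{k=1,…,6} to the first cycle and (2kπ/6 + β)_{k=1,…,6} to the second cycle is an equilibrium of the Kuramoto system. In particular the eye graph has a 2-dimensional torus of equilibria and infinitely many non-equivalent equilibria. -/
open Finset

/-- The eye graph `G₂`: two disjoint 6-cycles (indexed by `Bool`), plus the four
edges joining the first and fourth vertex of one cycle to the first and fourth
vertex of the other cycle. -/
def eyeAdj (u v : Bool × ZMod 6) : Prop :=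
  (u.1 = v.1 ∧ (v.2 = u.2 + 1 ∨ u.2 = v.2 + 1)) ∨
  (u.1 ≠ v.1 ∧ (u.2 = 1 ∨ u.2 = 4) ∧ (v.2 = 1 ∨ v.2 = 4))

instance : DecidableRel eyeAdj := fun u v => by unfold eyeAdj; infer_instance

/-- `θ` is an equilibrium of the Kuramoto system on the eye graph. -/
def IsEyeEquilibrium (θ : Bool × ZMod 6 → Real.Angle) : Prop :=
  ∀ j, ∑ k ∈ Finset.univ.filter (fun k => eyeAdj j k), (θ k - θ j).sin = 0

/-! In the splay state of a 6-cycle the two cycle neighbours of a vertex sit at phase offsets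
`±π/3`, and the cross neighbours `1'` and `4'` of the vertices `1` and `4` are antipodal. Hence
the neighbours of every vertex pair up, by reflection within its cycle and by the half turn
`n ↦ n + 3` on the other cycle, into pairs whose sines cancel, whatever the shifts `α`, `β` of
the two cycles. With `β = 0` and `α` varying, these equilibria agree on the second cycle, so no
two of them differ by a common phase shift. -/

open Real

instance Real.Angle.instInfinite : Infinite Angle :=
  (Set.infinite_range_iff Angle.toReal_injective).1 <|
    (Set.Ioc_infinite (neg_lt_self pi_pos)).mono fun x hx =>
      ⟨x, Angle.toReal_coe_eq_self_iff_mem_Ioc.2 hx⟩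

theorem Real.Angle.coe_two_pi_mul_mod_div (k m : ℕ) :
    ((2 * π * (k % m : ℕ) / m : ℝ) : Angle) = (2 * π * k / m : ℝ) := by
  rcases eq_or_ne m 0 with rfl | hm
  · simp
  conv_rhs => rw [← Nat.mod_add_div k m]
  rw [show 2 * π * ((k % m + m * (k / m) : ℕ) : ℝ) / m = 2 * π * (k % m : ℕ) / m + (k / m : ℕ) * (2 * π) by
      push_cast; field_simp,
    Angle.coe_add, Angle.natCast_mul_eq_nsmul, Angle.coe_two_pi, smul_zero, add_zero]

noncomputable def splayPhase (m : ℕ) [NeZero m] : ZMod m →+ Angle where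
  toFun n := (2 * π * n.val / m : ℝ)
  map_zero' := by simp
  map_add' a b := by
    rw [ZMod.val_add, Angle.coe_two_pi_mul_mod_div, ← Angle.coe_add]
    push_cast
    ring_nf

theorem splayPhase_six_three : splayPhase 6 3 = π := by
  simp only [splayPhase, AddMonoidHom.coe_mk, ZeroHom.coe_mk, show (3 : ZMod 6).val = 3 from rfl]
  congr 1
  push_cast
  ring

noncomputable def eyeSplay (φ : Bool → Angle) (v : Bool × ZMod 6) : Angle :=
  splayPhase 6 v.2 + φ v.1

def eyeMirror (j v : Bool × ZMod 6) : Bool × ZMod 6 :=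
  if v.1 = j.1 then (v.1, 2 * j.2 - v.2) else (v.1, v.2 + 3)

theorem eyeMirror_eyeMirror (j v : Bool × ZMod 6) : eyeMirror j (eyeMirror j v) = v := by
  revert j v; decide

theorem eyeAdj_eyeMirror {j v : Bool × ZMod 6} (h : eyeAdj j v) : eyeAdj j (eyeMirror j v) := by
  revert j v; decide

theorem eyeMirror_ne_self {j v : Bool × ZMod 6} (h : eyeAdj j v) : eyeMirror j v ≠ v := by
  revert j v; decide

theorem sin_sub_add_sin_eyeMirror_sub (φ : Bool → Angle) (j v : Bool × ZMod 6) :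
    (eyeSplay φ v - eyeSplay φ j).sin + (eyeSplay φ (eyeMirror j v) - eyeSplay φ j).sin = 0 := by
  set θ := eyeSplay φ
  by_cases hv : v.1 = j.1
  · have : θ (eyeMirror j v) - θ j = -(θ v - θ j) := by
      simp only [θ, eyeSplay, eyeMirror, if_pos hv]
      rw [map_sub, two_mul, map_add, hv]
      abel
    rw [this, Angle.sin_neg, add_neg_cancel]
  · have : θ (eyeMirror j v) - θ j = θ v - θ j + π := by
      simp only [θ, eyeSplay, eyeMirror, if_neg hv, map_add, splayPhase_six_three]
      abel
    rw [this, Angle.sin_add_pi, add_neg_cancel]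

theorem isEyeEquilibrium_eyeSplay (φ : Bool → Angle) : IsEyeEquilibrium (eyeSplay φ) := by
  intro j
  refine sum_involution (fun v _ => eyeMirror j v) (fun v _ => sin_sub_add_sin_eyeMirror_sub φ j v)
    (fun v hv _ => eyeMirror_ne_self (mem_filter.1 hv).2) (fun v hv => ?_)
    (fun v _ => eyeMirror_eyeMirror j v)
  exact mem_filter.2 ⟨mem_univ _, eyeAdj_eyeMirror (mem_filter.1 hv).2⟩

/-- On the eye graph, shifting the two splay 6-cycles independently by `α` and
`β` always yields an equilibrium; hence there is a 2-torus of equilibria and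
infinitely many pairwise non-equivalent equilibria. -/
theorem eye_graph_torus_of_equilibria :
    (∀ α β : Real.Angle, IsEyeEquilibrium (fun v =>
      ((2 * Real.pi * (v.2.val : ℝ) / 6 : ℝ) : Real.Angle) + (if v.1 then β else α))) ∧
    (∃ S : Set (Bool × ZMod 6 → Real.Angle), S.Infinite ∧
      (∀ θ ∈ S, IsEyeEquilibrium θ) ∧
      (∀ θ₁ ∈ S, ∀ θ₂ ∈ S, θ₁ ≠ θ₂ →
        ¬ ∃ c : Real.Angle, ∀ v, θ₁ v = θ₂ v + c)) := by
  have hequil (α β : Angle) : IsEyeEquilibrium (eyeSplay fun b => if b then β else α) :=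
    isEyeEquilibrium_eyeSplay _
  refine ⟨hequil, Set.range fun α => eyeSplay fun b => if b then 0 else α, ?_, ?_, ?_⟩
  · exact Set.infinite_range_of_injective fun α₁ α₂ h => by
      simpa [eyeSplay] using congrFun h (false, 0)
  · rintro _ ⟨α, rfl⟩
    exact hequil α 0
  · rintro _ ⟨α₁, rfl⟩ _ ⟨α₂, rfl⟩ hne ⟨c, hc⟩
    have hc0 : c = 0 := by simpa [eyeSplay] using (hc (true, 0)).symm
    exact hne (funext fun v => by simpa [hc0] using hc v)
end
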